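/- arXiv:math/0311367 — 3 statements merged into one kernel-verified Lean document; each statement's English description precedes it below -/
import Mathlib

section
/- Let O be a discrete valuation ring whose maximal ideal is generated by the prime number p. If p > n + 1, then the group GL_n(O) has no element of exact order p. -/
/-!
Since `p` generates the maximal ideal, it is a prime element of `O`, so the cyclotomic
polynomial `Φ_p` is Eisenstein at `p` after the shift `X ↦ X + 1`; by Gauss's lemma it stays
irreducible over the fraction field `K` of `O`. If `g ≠ 1` and `g ^ p = 1`, the minimal
polynomial of `g` over `K` divides `X ^ p - 1 = (X - 1) Φ_p` without dividing `X - 1`, hence is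
divisible by `Φ_p`. It also divides the characteristic polynomial, so `p - 1 ≤ n`.
-/

open Polynomial

namespace Polynomial

theorem Monic.taylor {R : Type*} [Semiring R] {f : R[X]} (hf : f.Monic) (r : R) :
    (Polynomial.taylor r f).Monic :=
  (leadingCoeff_taylor (r := r) (f := f)).trans hf

variable {R : Type*} [CommRing R] [IsDomain R] {p : ℕ} [hp : Fact p.Prime]

theorem taylor_one_cyclotomic_prime_isEisensteinAt (hpR : Prime (p : R)) :
    (taylor 1 (cyclotomic p R)).IsEisensteinAt (Ideal.span {(p : R)}) := by
  have hcoeff : ∀ i < p, (taylor 1 (cyclotomic p R)).coeff i = (p.choose (i + 1) : R) := by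
    intro i hi
    rw [taylor_apply, C_1, cyclotomic_prime, geom_sum_X_comp_X_add_one_eq_sum, finsetSum_coeff]
    simp [coeff_natCast_mul, coeff_X_pow, hi]
  refine (cyclotomic.monic p R).taylor 1 |>.isEisensteinAt_of_mem_of_notMem ?_ (fun {i} hi => ?_) ?_
  · rw [Ne, Ideal.span_singleton_eq_top]
    exact hpR.not_isUnit
  · rw [natDegree_taylor, natDegree_cyclotomic, Nat.totient_prime hp.out] at hi
    rw [hcoeff i (by omega), Ideal.mem_span_singleton]
    exact Nat.cast_dvd_cast (hp.out.dvd_choose_self i.succ_ne_zero (by omega))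
  · rw [hcoeff 0 hp.out.pos, Nat.choose_one_right, Ideal.span_singleton_pow,
      Ideal.mem_span_singleton, pow_two]
    intro h
    exact hpR.not_isUnit <| isUnit_of_dvd_one <|
      (mul_dvd_mul_iff_left hpR.ne_zero).1 (by simpa using h)

theorem cyclotomic_prime_irreducible_of_prime (hpR : Prime (p : R)) :
    Irreducible (cyclotomic p R) := by
  refine (MulEquiv.irreducible_iff (taylorEquiv (1 : R))).1 <|
    (taylor_one_cyclotomic_prime_isEisensteinAt hpR).irreducible
      ((Ideal.span_singleton_prime hpR.ne_zero).2 hpR)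
      ((cyclotomic.monic p R).taylor 1).isPrimitive ?_
  rw [natDegree_taylor, natDegree_cyclotomic, Nat.totient_prime hp.out]
  exact Nat.sub_pos_of_lt hp.out.one_lt

theorem cyclotomic_prime_irreducible_of_prime_of_isFractionRing [IsIntegrallyClosed R]
    (K : Type*) [Field K] [Algebra R K] [IsFractionRing R K] (hpR : Prime (p : R)) :
    Irreducible (cyclotomic p K) := by
  rw [← map_cyclotomic p (algebraMap R K),
    ← (cyclotomic.monic p R).irreducible_iff_irreducible_map_fraction_map]
  exact cyclotomic_prime_irreducible_of_prime hpR

end Polynomial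

section MinimalPolynomial

variable {K : Type*} [Field K] {p : ℕ} [hp : Fact p.Prime]

theorem cyclotomic_dvd_minpoly_of_pow_eq_one {A : Type*} [Ring A] [Algebra K A]
    (hirr : Irreducible (cyclotomic p K)) {a : A} (hpow : a ^ p = 1) (hne : a ≠ 1) :
    cyclotomic p K ∣ minpoly K a := by
  have hdvd : minpoly K a ∣ cyclotomic p K * (X - 1) :=
    minpoly.dvd K a (by simp [cyclotomic_prime_mul_X_sub_one, hpow])
  by_contra hndvd
  have hdvd_X_sub_one : minpoly K a ∣ X - 1 :=
    (hirr.coprime_iff_not_dvd.2 hndvd).symm.dvd_of_dvd_mul_left hdvd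
  refine hne (sub_eq_zero.1 ?_)
  simpa using aeval_eq_zero_of_dvd_aeval_eq_zero hdvd_X_sub_one (minpoly.aeval K a)

theorem Matrix.prime_sub_one_le_card_of_pow_eq_one {ι : Type*} [Fintype ι] [DecidableEq ι]
    (hirr : Irreducible (cyclotomic p K)) {M : Matrix ι ι K} (hpow : M ^ p = 1) (hne : M ≠ 1) :
    p - 1 ≤ Fintype.card ι := by
  have h := natDegree_le_of_dvd ((cyclotomic_dvd_minpoly_of_pow_eq_one hirr hpow hne).trans
    M.minpoly_dvd_charpoly) M.charpoly_monic.ne_zero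
  rwa [natDegree_cyclotomic, Nat.totient_prime hp.out, M.charpoly_natDegree_eq_dim] at h

end MinimalPolynomial

/-- Let `O` be a discrete valuation ring whose maximal ideal is generated by the prime
number `p`.  If `p > n + 1`, then `GL_n(O)` has no element of exact order `p`. -/
theorem gl_no_element_of_exact_order_p
    (O : Type*) [CommRing O] [IsDomain O] [IsDiscreteValuationRing O]
    (p : ℕ) (hp : p.Prime)
    (hmax : IsLocalRing.maximalIdeal O = Ideal.span {(p : O)})
    (n : ℕ) (hpn : p > n + 1) :
    ¬ ∃ g : GL (Fin n) O, g ^ p = 1 ∧ g ≠ 1 := by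
  rintro ⟨g, hgp, hg1⟩
  have := Fact.mk hp
  have hpO : Prime (p : O) :=
    ((IsDiscreteValuationRing.irreducible_iff_uniformizer _).2 hmax).prime
  let φ := (algebraMap O (FractionRing O)).mapMatrix (m := Fin n)
  have hφ : Function.Injective φ := Matrix.map_injective (IsFractionRing.injective _ _)
  have hφg_pow : φ g ^ p = 1 := by
    rw [← map_pow, ← Units.val_pow_eq_pow_val, hgp, Units.val_one, map_one]
  have hφg_ne : φ g ≠ 1 := fun h => hg1 (Units.ext (hφ (h.trans (map_one φ).symm)))
  have hle := Matrix.prime_sub_one_le_card_of_pow_eq_one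
    (cyclotomic_prime_irreducible_of_prime_of_isFractionRing (FractionRing O) hpO) hφg_pow hφg_ne
  rw [Fintype.card_fin] at hle
  omega
end

section
/- Let O be a discrete valuation ring with maximal ideal generated by the prime p, and suppose p > n + 1. If A ∈ GL_n(O) satisfies A^p = 1, then A = 1. -/
/-!
Because `p` is a uniformiser, `Φ_p(X + 1)` is Eisenstein at the maximal ideal, so the cyclotomic
polynomial `Φ_p` is irreducible over the fraction field `K`. Over `K` the minimal polynomial of `A`
divides `X ^ p - 1 = Φ_p * (X - 1)` and has degree at most `n < p - 1 = deg Φ_p`, so it is coprime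
to `Φ_p`, hence divides `X - 1`, and `A = 1`.
-/

open Polynomial

theorem self_notMem_span_singleton_sq {R : Type*} [CommRing R] [IsDomain R] {x : R}
    (hx0 : x ≠ 0) (hx : ¬IsUnit x) : x ∉ Ideal.span {x} ^ 2 := by
  rw [Ideal.span_singleton_pow, Ideal.mem_span_singleton, ← pow_one x, ← pow_mul,
    pow_dvd_pow_iff hx0 hx]
  omega

namespace Polynomial

variable {R : Type*} [CommRing R] {p : ℕ} [Fact p.Prime]

theorem isEisensteinAt_cyclotomic_prime_comp_X_add_one {P : Ideal R} (hP : P ≠ ⊤)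
    (hpP : (p : R) ∈ P) (hpP2 : (p : R) ∉ P ^ 2) :
    ((cyclotomic p R).comp (X + C 1)).IsEisensteinAt P := by
  have hmap : (cyclotomic p R).comp (X + C 1) =
      ((cyclotomic p ℤ).comp (X + 1)).map (Int.castRingHom R) := by
    simp [Polynomial.map_comp, map_cyclotomic]
  refine ((cyclotomic.monic p R).comp_X_add_C 1).isEisensteinAt_of_mem_of_notMem hP
    (fun {i} hi => ?_) ?_
  · obtain ⟨c, hc⟩ := Ideal.mem_span_singleton.mp <|
      (cyclotomic_comp_X_add_one_isEisensteinAt p).mem (hi.trans_le (hmap ▸ natDegree_map_le))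
    rw [hmap, coeff_map, hc, eq_intCast, Int.cast_mul, Int.cast_natCast]
    exact P.mul_mem_right _ hpP
  · rwa [coeff_zero_eq_eval_zero, eval_comp, eval_add, eval_X, eval_C, zero_add,
      eval_one_cyclotomic_prime]

theorem irreducible_cyclotomic_prime_of_mem_of_notMem_sq [IsDomain R] [IsIntegrallyClosed R]
    (K : Type*) [Field K] [Algebra R K] [IsFractionRing R K] {P : Ideal R} [hP : P.IsPrime]
    (hpP : (p : R) ∈ P) (hpP2 : (p : R) ∉ P ^ 2) : Irreducible (cyclotomic p K) := by
  have hmonic := (cyclotomic.monic p R).comp_X_add_C 1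
  have hdeg : 0 < ((cyclotomic p R).comp (X + C 1)).natDegree := by
    rw [natDegree_comp, natDegree_cyclotomic, Nat.totient_prime Fact.out, natDegree_X_add_C,
      mul_one]
    exact Nat.sub_pos_of_lt (Fact.out : p.Prime).one_lt
  have hirr := (isEisensteinAt_cyclotomic_prime_comp_X_add_one hP.ne_top hpP hpP2).irreducible
    hP hmonic.isPrimitive hdeg
  have hirrK := (hmonic.irreducible_iff_irreducible_map_fraction_map (K := K)).1 hirr
  rw [Polynomial.map_comp, map_cyclotomic, Polynomial.map_add, map_X, map_C, map_one,
    comp_eq_aeval, ← algEquivAevalXAddC_apply] at hirrK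
  exact (MulEquiv.irreducible_iff (algEquivAevalXAddC (1 : K))).mp hirrK

end Polynomial

theorem eq_one_of_pow_prime_eq_one {K A : Type*} [Field K] [Ring A] [Algebra K A] {p : ℕ}
    [Fact p.Prime] (hΦ : Irreducible (cyclotomic p K)) {x : A} (hx : IsIntegral K x)
    (hxp : x ^ p = 1) (hdeg : (minpoly K x).natDegree < p - 1) : x = 1 := by
  have hdvd : minpoly K x ∣ cyclotomic p K * (X - 1) := by
    refine minpoly.dvd K x ?_
    rw [cyclotomic_prime_mul_X_sub_one, map_sub, map_pow, aeval_X, map_one, hxp, sub_self]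
  have hΦ_not_dvd : ¬cyclotomic p K ∣ minpoly K x := fun h => by
    have := natDegree_le_of_dvd h (minpoly.ne_zero hx)
    rw [natDegree_cyclotomic, Nat.totient_prime Fact.out] at this
    omega
  have hcop : IsCoprime (minpoly K x) (cyclotomic p K) :=
    (hΦ.coprime_iff_not_dvd.mpr hΦ_not_dvd).symm
  obtain ⟨q, hq⟩ := hcop.dvd_of_dvd_mul_left hdvd
  have := congrArg (aeval x) hq
  rwa [map_mul, minpoly.aeval, zero_mul, map_sub, aeval_X, map_one, sub_eq_zero] at this

theorem Matrix.eq_one_of_pow_prime_eq_one {K ι : Type*} [Field K] [Fintype ι] [DecidableEq ι]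
    {p : ℕ} [Fact p.Prime] (hΦ : Irreducible (cyclotomic p K)) {M : Matrix ι ι K}
    (hMp : M ^ p = 1) (hcard : Fintype.card ι + 1 < p) : M = 1 := by
  refine _root_.eq_one_of_pow_prime_eq_one hΦ (IsIntegral.of_finite K M) hMp ?_
  have := natDegree_le_of_dvd (Matrix.minpoly_dvd_charpoly M) (Matrix.charpoly_monic M).ne_zero
  rw [Matrix.charpoly_natDegree_eq_dim] at this
  omega

/-- Let `O` be a discrete valuation ring with maximal ideal generated by the prime `p`,
and suppose `p > n + 1`.  If `A ∈ GL_n(O)` satisfies `A ^ p = 1`, then `A = 1`. -/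
theorem gl_pth_power_trivial
    (O : Type*) [CommRing O] [IsDomain O] [IsDiscreteValuationRing O]
    (p : ℕ) (hp : p.Prime)
    (hmax : IsLocalRing.maximalIdeal O = Ideal.span {(p : O)})
    (n : ℕ) (hpn : p > n + 1)
    (A : GL (Fin n) O) (hA : A ^ p = 1) :
    A = 1 := by
  have : Fact p.Prime := ⟨hp⟩
  let K := FractionRing O
  have hp0 : (p : O) ≠ 0 := fun h =>
    IsDiscreteValuationRing.not_a_field O (by rw [hmax, h, Ideal.span_singleton_eq_bot])
  have hpm : (p : O) ∈ IsLocalRing.maximalIdeal O := hmax ▸ Ideal.mem_span_singleton_self _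
  have hpu : ¬IsUnit (p : O) := mem_nonunits_iff.mp ((IsLocalRing.mem_maximalIdeal _).mp hpm)
  have hΦ : Irreducible (cyclotomic p K) :=
    irreducible_cyclotomic_prime_of_mem_of_notMem_sq K hpm
      (hmax ▸ self_notMem_span_singleton_sq hp0 hpu)
  have hinj : Function.Injective ((algebraMap O K).mapMatrix : Matrix (Fin n) (Fin n) O → _) :=
    Matrix.map_injective (IsFractionRing.injective O K)
  refine Units.ext (hinj ?_)
  rw [Units.val_one, map_one]
  refine Matrix.eq_one_of_pow_prime_eq_one hΦ ?_ (by simpa using hpn)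
  rw [← map_pow, ← Units.val_pow_eq_pow_val, hA, Units.val_one, map_one]
end

section
/- For any integer N ≥ 1, the quotient Γ(N)/Γ(N²) is isomorphic to the additive group M₂(Z/N)⁰ of traceless 2×2 matrices over Z/N, via the map sending a matrix A ∈ Γ(N) (so A = 1 + N·B for an integer matrix B) to the reduction of B modulo N. -/
/-!
Write `A ∈ Γ(N)` as `1 + N • B`. Since `(1 + N • B) * (1 + N • B') = 1 + N • (B + B' + N • B * B')`,
the map `A ↦ B mod N` is a homomorphism, and `det (1 + N • B) = 1 + N * tr B + N² * det B` forces
`tr B ≡ 0 mod N`. Its kernel consists of the `A` with `B ≡ 0 mod N`, i.e. `A ∈ Γ(N²)`. For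
surjectivity, every traceless matrix is a sum of matrices `K` with `tr K = det K = 0`, and for
those `1 + N • K` has determinant one.
-/
open Matrix CongruenceSubgroup
open scoped MatrixGroups

lemma Matrix.det_one_add_fin_two {R : Type*} [CommRing R] (M : Matrix (Fin 2) (Fin 2) R) :
    det (1 + M) = 1 + trace M + det M := by
  simp only [det_fin_two, trace_fin_two, add_apply, one_apply_eq, one_apply_ne, ne_eq,
    zero_ne_one, one_ne_zero, not_false_eq_true, zero_add]
  ring

lemma one_add_smul_mul_one_add_smul {R : Type*} [Ring R] (c : ℤ) (x y : R) :
    (1 + c • x) * (1 + c • y) = 1 + c • (x + y + c • (x * y)) := by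
  simp only [mul_add, add_mul, one_mul, mul_one, smul_mul_assoc, mul_smul_comm, smul_add,
    smul_smul]
  abel

lemma Matrix.map_intCast_zmod_eq_zero_iff {m n : Type*} {N : ℕ} {M : Matrix m n ℤ} :
    M.map (Int.cast : ℤ → ZMod N) = 0 ↔ ∃ B : Matrix m n ℤ, M = (N : ℤ) • B := by
  constructor
  · intro h
    have hdvd : ∀ i j, (N : ℤ) ∣ M i j := fun i j =>
      (ZMod.intCast_zmod_eq_zero_iff_dvd _ _).mp (congrFun₂ h i j)
    choose B hB using hdvd
    exact ⟨of B, by ext i j; exact hB i j⟩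
  · rintro ⟨B, rfl⟩
    ext i j
    simp

namespace CongruenceSubgroup

variable {N : ℕ}

lemma mem_Gamma_iff_map_intCast_eq_one {A : SL(2, ℤ)} :
    A ∈ Gamma N ↔ (A : Matrix (Fin 2) (Fin 2) ℤ).map (Int.cast : ℤ → ZMod N) = 1 := by
  rw [Gamma_mem', Matrix.SpecialLinearGroup.ext_iff, ← Matrix.ext_iff]
  rfl

lemma mem_Gamma_iff_exists_eq_one_add_smul {A : SL(2, ℤ)} :
    A ∈ Gamma N ↔
      ∃ B : Matrix (Fin 2) (Fin 2) ℤ, (A : Matrix (Fin 2) (Fin 2) ℤ) = 1 + (N : ℤ) • B := by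
  have hsub : ((A : Matrix (Fin 2) (Fin 2) ℤ) - 1).map (Int.cast : ℤ → ZMod N)
      = (A : Matrix (Fin 2) (Fin 2) ℤ).map Int.cast - 1 := by
    simp [Matrix.map_sub]
  rw [mem_Gamma_iff_map_intCast_eq_one, ← sub_eq_zero, ← hsub, map_intCast_zmod_eq_zero_iff]
  simp only [sub_eq_iff_eq_add']

namespace Gamma

noncomputable def deviation (A : Gamma N) : Matrix (Fin 2) (Fin 2) ℤ :=
  (mem_Gamma_iff_exists_eq_one_add_smul.mp A.2).choose

lemma coe_eq_one_add_smul_deviation (A : Gamma N) :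
    ((A : SL(2, ℤ)) : Matrix (Fin 2) (Fin 2) ℤ) = 1 + (N : ℤ) • deviation A :=
  (mem_Gamma_iff_exists_eq_one_add_smul.mp A.2).choose_spec

variable [NeZero N]

lemma deviation_eq_of_coe_eq {A : Gamma N} {B : Matrix (Fin 2) (Fin 2) ℤ}
    (h : ((A : SL(2, ℤ)) : Matrix (Fin 2) (Fin 2) ℤ) = 1 + (N : ℤ) • B) : deviation A = B :=
  smul_right_injective _ (Int.natCast_ne_zero.mpr (NeZero.ne N)) <|
    add_left_cancel ((coe_eq_one_add_smul_deviation A).symm.trans h)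

lemma deviation_mul (A B : Gamma N) :
    deviation (A * B) = deviation A + deviation B + (N : ℤ) • (deviation A * deviation B) := by
  apply deviation_eq_of_coe_eq
  rw [Subgroup.coe_mul, Matrix.SpecialLinearGroup.coe_mul, coe_eq_one_add_smul_deviation A,
    coe_eq_one_add_smul_deviation B, one_add_smul_mul_one_add_smul]

lemma trace_deviation (A : Gamma N) :
    trace (deviation A) = -(N : ℤ) * det (deviation A) := by
  have h := (A : SL(2, ℤ)).2
  rw [coe_eq_one_add_smul_deviation, det_one_add_fin_two, trace_smul, det_smul] at h
  simp only [Fintype.card_fin, smul_eq_mul] at h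
  apply mul_left_cancel₀ (Int.natCast_ne_zero.mpr (NeZero.ne N))
  linear_combination h

lemma trace_map_deviation (A : Gamma N) :
    trace ((deviation A).map (Int.cast : ℤ → ZMod N)) = 0 := by
  rw [trace_fin_two, map_apply, map_apply, ← Int.cast_add, ← trace_fin_two, trace_deviation]
  simp

lemma map_deviation_mul (A B : Gamma N) :
    (deviation (A * B)).map (Int.cast : ℤ → ZMod N)
      = (deviation A).map Int.cast + (deviation B).map Int.cast := by
  ext i j
  simp only [deviation_mul, map_apply, Matrix.add_apply, Matrix.smul_apply, smul_eq_mul,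
    Int.cast_add, Int.cast_mul, Int.cast_natCast, ZMod.natCast_self, zero_mul, add_zero]

lemma mem_Gamma_sq_iff (A : Gamma N) :
    (A : SL(2, ℤ)) ∈ Gamma (N ^ 2) ↔ (deviation A).map (Int.cast : ℤ → ZMod N) = 0 := by
  have hN : (N : ℤ) ≠ 0 := Int.natCast_ne_zero.mpr (NeZero.ne N)
  rw [mem_Gamma_iff_exists_eq_one_add_smul, map_intCast_zmod_eq_zero_iff,
    coe_eq_one_add_smul_deviation]
  push_cast
  simp only [add_right_inj, pow_two, mul_smul, smul_right_inj hN]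

def oneAddSmul (K : Matrix (Fin 2) (Fin 2) ℤ) (htr : trace K = 0) (hdet : det K = 0) :
    Gamma N :=
  ⟨⟨1 + (N : ℤ) • K, by rw [det_one_add_fin_two, trace_smul, det_smul, htr, hdet]; simp⟩,
    mem_Gamma_iff_exists_eq_one_add_smul.mpr ⟨K, rfl⟩⟩

lemma deviation_oneAddSmul (K : Matrix (Fin 2) (Fin 2) ℤ) (htr : trace K = 0)
    (hdet : det K = 0) : deviation (oneAddSmul (N := N) K htr hdet) = K :=
  deviation_eq_of_coe_eq rfl

lemma exists_map_deviation_eq {C : Matrix (Fin 2) (Fin 2) (ZMod N)} (hC : trace C = 0) :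
    ∃ A : Gamma N, (deviation A).map (Int.cast : ℤ → ZMod N) = C := by
  -- `!![a, b; c, -a] = !![a, a; -a, -a] + !![0, b - a; 0, 0] + !![0, 0; c + a, 0]`
  rw [trace_fin_two] at hC
  set a : ℤ := (C 0 0).cast
  set b : ℤ := (C 0 1).cast
  set c : ℤ := (C 1 0).cast
  refine ⟨oneAddSmul !![a, a; -a, -a] (by simp) (by simp [det_fin_two_of]) *
    oneAddSmul !![0, b - a; 0, 0] (by simp) (by simp [det_fin_two_of]) *
    oneAddSmul !![0, 0; c + a, 0] (by simp) (by simp [det_fin_two_of]), ?_⟩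
  simp only [map_deviation_mul, deviation_oneAddSmul]
  ext i j
  fin_cases i <;> fin_cases j <;> simp [a, b, c]
  linear_combination -hC

noncomputable def toTraceless :
    Gamma N →* Multiplicative (LinearMap.ker (traceLinearMap (Fin 2) (ZMod N) (ZMod N))) :=
  MonoidHom.mk' (fun A => .ofAdd ⟨(deviation A).map Int.cast, trace_map_deviation A⟩)
    fun A B => Subtype.ext (map_deviation_mul A B)

lemma coe_toAdd_toTraceless (A : Gamma N) :
    ((toTraceless A).toAdd : Matrix (Fin 2) (Fin 2) (ZMod N)) = (deviation A).map Int.cast :=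
  rfl

lemma toTraceless_surjective : Function.Surjective (toTraceless (N := N)) := by
  intro x
  obtain ⟨A, hA⟩ := exists_map_deviation_eq (LinearMap.mem_ker.mp x.toAdd.2)
  exact ⟨A, Subtype.ext hA⟩

lemma ker_toTraceless :
    (toTraceless (N := N)).ker = (Gamma (N ^ 2)).comap (Gamma N).subtype := by
  ext A
  rw [MonoidHom.mem_ker, Subgroup.mem_comap, Subgroup.coe_subtype, mem_Gamma_sq_iff,
    ← coe_toAdd_toTraceless, ← toAdd_eq_zero, Submodule.coe_eq_zero]

end Gamma
end CongruenceSubgroup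

/-- For `N ≥ 1`, the quotient `Γ(N)/Γ(N²)` is isomorphic to the additive group of
traceless `2 × 2` matrices over `ℤ/N`, via the map sending `A = 1 + N·B ∈ Γ(N)` to the
reduction of `B` modulo `N`.  This is stated as: there is a group homomorphism `φ` from
`Γ(N)` to the (multiplicative version of the) additive group of traceless matrices,
computing `B mod N` on `A = 1 + N·B`, which is surjective with kernel `Γ(N²)`. -/
theorem gamma_quotient_iso_traceless
    (N : ℕ) (hN : 1 ≤ N) :
    ∃ φ : (CongruenceSubgroup.Gamma N) →*
        Multiplicative (LinearMap.ker (Matrix.traceLinearMap (Fin 2) (ZMod N) (ZMod N))),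
      (∀ (A : CongruenceSubgroup.Gamma N) (B : Matrix (Fin 2) (Fin 2) ℤ),
          ((A : Matrix.SpecialLinearGroup (Fin 2) ℤ) : Matrix (Fin 2) (Fin 2) ℤ)
            = 1 + (N : ℤ) • B →
          ((Multiplicative.toAdd (φ A) : LinearMap.ker
              (Matrix.traceLinearMap (Fin 2) (ZMod N) (ZMod N)) )
            : Matrix (Fin 2) (Fin 2) (ZMod N)) = B.map (Int.cast : ℤ → ZMod N)) ∧
      Function.Surjective φ ∧
      MonoidHom.ker φ
        = Subgroup.comap (CongruenceSubgroup.Gamma N).subtype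
            (CongruenceSubgroup.Gamma (N ^ 2)) := by
  have : NeZero N := ⟨by omega⟩
  refine ⟨Gamma.toTraceless, fun A B hAB => ?_, Gamma.toTraceless_surjective,
    Gamma.ker_toTraceless⟩
  rw [Gamma.coe_toAdd_toTraceless, Gamma.deviation_eq_of_coe_eq hAB]
end
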